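/- The extended centroid of the path algebra KC_n of the cycle with n vertices is isomorphic to the field of rational functions K(x). -/

import Mathlib

/-- A directed graph: vertices, edges, source and range maps. -/
structure DGraph : Type 1 where
  V : Type
  Edge : Type
  s : Edge → V
  r : Edge → V

namespace DGraph

/-- A list of edges is composable if consecutive edges match up. -/
def IsComposable (G : DGraph) (l : List G.Edge) : Prop :=
  l.Chain' (fun e f => G.r e = G.s f)

/-- A path in `G`: either a trivial path at a vertex, or a nonempty composable list of edges. -/
def GPath (G : DGraph) : Type :=
  G.V ⊕ {l : List G.Edge // l ≠ [] ∧ G.IsComposable l}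

namespace GPath

variable {G : DGraph}

/-- The source of a path. -/
def src : GPath G → G.V
  | Sum.inl v => v
  | Sum.inr l => G.s (l.1.head l.2.1)

/-- The range of a path. -/
def rng : GPath G → G.V
  | Sum.inl v => v
  | Sum.inr l => G.r (l.1.getLast l.2.1)

/-- The length of a path. -/
def length : GPath G → ℕ
  | Sum.inl _ => 0
  | Sum.inr l => l.1.length

/-- The trivial path at a vertex. -/
def ofVertex (v : G.V) : GPath G := Sum.inl v

/-- The length-one path given by an edge. -/
def ofEdge (e : G.Edge) : GPath G :=
  Sum.inr ⟨[e], by exact ⟨List.cons_ne_nil _ _, List.isChain_singleton e⟩⟩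

/-- Concatenation of composable paths. -/
def comp : (p q : GPath G) → p.rng = q.src → GPath G
  | Sum.inl _, q, _ => q
  | Sum.inr l, Sum.inl _, _ => Sum.inr l
  | Sum.inr l, Sum.inr m, h => Sum.inr ⟨l.1 ++ m.1, by
      refine ⟨by simp [l.2.1], l.2.2.append m.2.2 ?_⟩
      intro x hx y hy
      rw [List.getLast?_eq_some_getLast l.2.1] at hx
      rw [List.head?_eq_head m.2.1] at hy
      cases hx
      cases hy
      exact h⟩

end GPath

end DGraph

open DGraph

/-- A realization of the path algebra of the graph `G` over the field `K`:
a `K`-algebra with a basis indexed by the paths of `G`, multiplying by concatenation. -/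
structure PathAlgebraOn (K : Type) [Field K] (G : DGraph) (A : Type)
    [NonUnitalRing A] [Module K A] where
  basis : Module.Basis (GPath G) K A
  mul_comp : ∀ (p q : GPath G) (h : p.rng = q.src),
      basis p * basis q = basis (p.comp q h)
  mul_ncomp : ∀ p q : GPath G, p.rng ≠ q.src → basis p * basis q = 0

/-- The cycle graph with `n` vertices. -/
def cycleGraph (n : ℕ) [NeZero n] : DGraph where
  V := Fin n
  Edge := Fin n
  s i := i
  r i := i + 1

/-- An admissible pair: a nonzero two-sided ideal `I` together with a linear map
that is an `A`-bimodule homomorphism on `I`.  (Any partial bimodule homomorphism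
defined on `I` extends `K`-linearly to all of `A`, so this encoding is faithful.) -/
structure AdmPair (K : Type) [Field K] (A : Type) [NonUnitalRing A] [Module K A] where
  I : TwoSidedIdeal A
  ne : I ≠ ⊥
  f : A →ₗ[K] A
  map_left : ∀ x ∈ I, ∀ a : A, f (a * x) = a * f x
  map_right : ∀ x ∈ I, ∀ a : A, f (x * a) = f x * a

/-- Two admissible pairs are equivalent iff the maps agree on the intersection of
their ideals. -/
def AdmPair.Equiv {K : Type} [Field K] {A : Type} [NonUnitalRing A] [Module K A]
    (p q : AdmPair K A) : Prop :=
  ∀ x : A, x ∈ p.I → x ∈ q.I → p.f x = q.f x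

/-!
Write `e_v` for the trivial path at `v` and `z` for the sum of the `n` cycles of length `n`.
Then `X ↦ z` maps `K[X]` isomorphically onto the center of `KCₙ`, and `KCₙ` is
torsion-free over `K[z]`: each corner `e_v x e_w` is `g(z)` times the shortest path from `v`
to `w`. Moreover every nonzero ideal contains some `g(z) ≠ 0`, obtained by padding a nonzero
corner with paths. For an admissible pair `(f, I)` and `0 ≠ s ∈ I ∩ K[z]`, `f(s)` is central,
so `f(s) = r` for some `r ∈ K[z]`, and `(f, I) ↦ r / s ∈ K(X)` is the isomorphism.
-/

theorem IsFractionRing.algebraMap_div_eq_div_iff {R F : Type*} [CommRing R] [Field F]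
    [Algebra R F] [IsFractionRing R F] {a b s t : R} (hs : s ≠ 0) (ht : t ≠ 0) :
    algebraMap R F a / algebraMap R F s = algebraMap R F b / algebraMap R F t ↔
      a * t = b * s := by
  rw [div_eq_div_iff (by simpa using hs) (by simpa using ht), ← map_mul, ← map_mul,
    (IsFractionRing.injective R F).eq_iff]

theorem algebraMap_mul_left_injective {R A : Type*} [CommRing R] [IsDomain R] [Ring A]
    [Algebra R A] [Module.IsTorsionFree R A] {s : R} (hs : s ≠ 0) :
    Function.Injective (algebraMap R A s * ·) := by
  simpa only [← Algebra.smul_def] using smul_right_injective A hs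

section ExtendedCentroid

variable {K : Type} [Field K] {R : Type*} [CommRing R] {A : Type} [Ring A] [Algebra R A]
  [Module K A]

namespace AdmPair

/-- `p` acts as multiplication by `a / s`. -/
def IsFraction (p : AdmPair K A) (a s : R) : Prop :=
  s ≠ 0 ∧ algebraMap R A s ∈ p.I ∧ p.f (algebraMap R A s) = algebraMap R A a

variable {p q u : AdmPair K A} {a b s t : R}

theorem IsFraction.algebraMap_mul_apply (h : p.IsFraction a s) {x : A} (hx : x ∈ p.I) :
    algebraMap R A s * p.f x = algebraMap R A a * x := by
  rw [← p.map_left x hx, Algebra.commutes, p.map_left _ h.2.1, h.2.2, ← Algebra.commutes]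

theorem exists_isFraction_of_mem (hcenter : Set.center A ⊆ Set.range (algebraMap R A))
    (hs : s ≠ 0) (hsI : algebraMap R A s ∈ p.I) : ∃ a, p.IsFraction a s := by
  have hcentral : p.f (algebraMap R A s) ∈ Set.center A :=
    Semigroup.mem_center_iff.mpr fun x => by
      rw [← p.map_left _ hsI, ← Algebra.commutes, p.map_right _ hsI]
  obtain ⟨a, ha⟩ := hcenter hcentral
  exact ⟨a, hs, hsI, ha.symm⟩

theorem exists_isFraction (hcenter : Set.center A ⊆ Set.range (algebraMap R A))
    (hideal : ∀ I : TwoSidedIdeal A, I ≠ ⊥ → ∃ s : R, s ≠ 0 ∧ algebraMap R A s ∈ I)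
    (p : AdmPair K A) : ∃ a s : R, p.IsFraction a s := by
  obtain ⟨s, hs, hsI⟩ := hideal p.I p.ne
  obtain ⟨a, ha⟩ := exists_isFraction_of_mem hcenter hs hsI
  exact ⟨a, s, ha⟩

variable [IsDomain R] [Module.IsTorsionFree R A] [Nontrivial A]

theorem IsFraction.mul_eq_mul (h : p.IsFraction a s) (h' : p.IsFraction b t) :
    a * t = b * s := by
  apply FaithfulSMul.algebraMap_injective R A
  rw [mul_comm a, map_mul, map_mul, ← h.2.2, h'.algebraMap_mul_apply h.2.1]

variable [SMulCommClass K A A] in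
theorem exists_isFraction_of_ne_zero (a : R) (hs : s ≠ 0) :
    ∃ p : AdmPair K A, p.IsFraction a s := by
  set σ := algebraMap R A s
  have hσ : σ ∈ Set.center A :=
    Semigroup.mem_center_iff.mpr fun x => (Algebra.commutes s x).symm
  obtain ⟨ℓ, hℓ⟩ := LinearMap.exists_leftInverse_of_injective (LinearMap.mulLeft K σ)
    (LinearMap.ker_eq_bot.mpr (algebraMap_mul_left_injective hs))
  have hℓσ (x : A) : ℓ (σ * x) = x := LinearMap.congr_fun hℓ x
  let I : TwoSidedIdeal A := .mk' (Set.range (σ * ·)) ⟨0, mul_zero σ⟩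
    (by rintro _ _ ⟨x, rfl⟩ ⟨y, rfl⟩; exact ⟨x + y, mul_add σ x y⟩)
    (by rintro _ ⟨x, rfl⟩; exact ⟨-x, mul_neg σ x⟩)
    (by rintro x _ ⟨y, rfl⟩; exact ⟨x * y, by rw [← mul_assoc, ← hσ.comm, mul_assoc]⟩)
    (by rintro _ y ⟨x, rfl⟩; exact ⟨x * y, (mul_assoc σ x y).symm⟩)
  have hmem (x : A) : x ∈ I ↔ ∃ y, σ * y = x := TwoSidedIdeal.mem_mk' ..
  have hσI : σ ∈ I := (hmem σ).mpr ⟨1, mul_one σ⟩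
  let f : A →ₗ[K] A := LinearMap.mulLeft K (algebraMap R A a) ∘ₗ ℓ
  have hf (x : A) : f (σ * x) = algebraMap R A a * x := by simp [f, hℓσ]
  refine ⟨⟨I, fun hI => ?_, f, ?_, ?_⟩, hs, hσI, ?_⟩
  · rw [hI, TwoSidedIdeal.mem_bot, FaithfulSMul.algebraMap_eq_zero_iff] at hσI
    exact hs hσI
  · rintro _ hx x
    obtain ⟨y, rfl⟩ := (hmem _).mp hx
    rw [← mul_assoc, ← hσ.comm, mul_assoc, hf, hf, ← mul_assoc, Algebra.commutes, mul_assoc]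
  · rintro _ hx x
    obtain ⟨y, rfl⟩ := (hmem _).mp hx
    rw [mul_assoc, hf, hf, mul_assoc]
  · simpa using hf 1

variable (R) (F : Type*) [Field F] [Algebra R F]

open Classical in
/-- The junk value `0` is never taken once every nonzero ideal of `A` meets `R`
(`exists_isFraction`). -/
noncomputable def toFrac (p : AdmPair K A) : F :=
  if h : ∃ as : R × R, p.IsFraction as.1 as.2 then
    algebraMap R F h.choose.1 / algebraMap R F h.choose.2
  else 0

variable {R F} [IsFractionRing R F]

theorem toFrac_eq (h : p.IsFraction a s) :
    p.toFrac R F = algebraMap R F a / algebraMap R F s := by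
  have hex : ∃ as : R × R, p.IsFraction as.1 as.2 := ⟨(a, s), h⟩
  rw [toFrac, dif_pos hex, IsFractionRing.algebraMap_div_eq_div_iff hex.choose_spec.1 h.1]
  exact hex.choose_spec.mul_eq_mul h

variable [SMulCommClass K A A] in
theorem toFrac_surjective : Function.Surjective (toFrac R F : AdmPair K A → F) := by
  intro ρ
  obtain ⟨a, s, hs, rfl⟩ := IsFractionRing.div_surjective R ρ
  obtain ⟨p, hp⟩ :=
    exists_isFraction_of_ne_zero (K := K) (A := A) a (nonZeroDivisors.ne_zero hs)
  exact ⟨p, toFrac_eq hp⟩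

theorem toFrac_eq_toFrac_iff (hcenter : Set.center A ⊆ Set.range (algebraMap R A))
    (hideal : ∀ I : TwoSidedIdeal A, I ≠ ⊥ → ∃ s : R, s ≠ 0 ∧ algebraMap R A s ∈ I) :
    p.toFrac R F = q.toFrac R F ↔ p.Equiv q := by
  obtain ⟨a, s, hp⟩ := exists_isFraction hcenter hideal p
  obtain ⟨b, t, hq⟩ := exists_isFraction hcenter hideal q
  rw [toFrac_eq hp, toFrac_eq hq, IsFractionRing.algebraMap_div_eq_div_iff hp.1 hq.1]
  constructor
  · intro h x hxp hxq
    apply algebraMap_mul_left_injective (mul_ne_zero hp.1 hq.1)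
    calc algebraMap R A (s * t) * p.f x = algebraMap R A t * (algebraMap R A s * p.f x) := by
          rw [mul_comm, map_mul, mul_assoc]
      _ = algebraMap R A (b * s) * x := by
          rw [hp.algebraMap_mul_apply hxp, ← mul_assoc, ← map_mul, mul_comm, h]
      _ = algebraMap R A (s * t) * q.f x := by
          rw [mul_comm b, map_mul, mul_assoc, ← hq.algebraMap_mul_apply hxq, ← mul_assoc,
            ← map_mul]
  · intro h
    have hst := h (algebraMap R A (s * t))
      (by rw [map_mul]; exact p.I.mul_mem_right _ _ hp.2.1)
      (by rw [mul_comm, map_mul]; exact q.I.mul_mem_right _ _ hq.2.1)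
    apply FaithfulSMul.algebraMap_injective R A
    rw [map_mul, map_mul, ← hp.2.2, ← hq.2.2, ← p.map_right _ hp.2.1, ← q.map_right _ hq.2.1,
      ← map_mul, ← map_mul, mul_comm t s, hst]

theorem toFrac_eq_one
    (hideal : ∀ I : TwoSidedIdeal A, I ≠ ⊥ → ∃ s : R, s ≠ 0 ∧ algebraMap R A s ∈ I)
    (h : ∀ x ∈ p.I, p.f x = x) : p.toFrac R F = 1 := by
  obtain ⟨s, hs, hsI⟩ := hideal p.I p.ne
  rw [toFrac_eq ⟨hs, hsI, h _ hsI⟩, div_self (by simpa using hs)]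

theorem toFrac_add (hcenter : Set.center A ⊆ Set.range (algebraMap R A))
    (hideal : ∀ I : TwoSidedIdeal A, I ≠ ⊥ → ∃ s : R, s ≠ 0 ∧ algebraMap R A s ∈ I)
    (hup : u.I ≤ p.I) (huq : u.I ≤ q.I) (h : ∀ x ∈ u.I, u.f x = p.f x + q.f x) :
    u.toFrac R F = p.toFrac R F + q.toFrac R F := by
  obtain ⟨s, hs, hsI⟩ := hideal u.I u.ne
  obtain ⟨a, ha⟩ := exists_isFraction_of_mem hcenter hs (hup hsI)
  obtain ⟨b, hb⟩ := exists_isFraction_of_mem hcenter hs (huq hsI)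
  have hu : u.IsFraction (a + b) s := ⟨hs, hsI, by rw [h _ hsI, ha.2.2, hb.2.2, map_add]⟩
  rw [toFrac_eq hu, toFrac_eq ha, toFrac_eq hb, map_add, add_div]

theorem toFrac_comp (hcenter : Set.center A ⊆ Set.range (algebraMap R A))
    (hideal : ∀ I : TwoSidedIdeal A, I ≠ ⊥ → ∃ s : R, s ≠ 0 ∧ algebraMap R A s ∈ I)
    (huq : u.I ≤ q.I) (h : ∀ x ∈ u.I, q.f x ∈ p.I ∧ u.f x = p.f (q.f x)) :
    u.toFrac R F = p.toFrac R F * q.toFrac R F := by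
  obtain ⟨s, hs, hsI⟩ := hideal u.I u.ne
  obtain ⟨b, hb⟩ := exists_isFraction_of_mem hcenter hs (huq hsI)
  obtain ⟨hbI, hus⟩ := h _ hsI
  rw [hb.2.2] at hbI hus
  rcases eq_or_ne b 0 with rfl | hb0
  · have hu : u.IsFraction 0 s := ⟨hs, hsI, by rw [hus, map_zero, map_zero]⟩
    rw [toFrac_eq hu, toFrac_eq hb, map_zero, zero_div, mul_zero]
  · obtain ⟨c, hc⟩ := exists_isFraction_of_mem hcenter hb0 hbI
    have hu : u.IsFraction c s := ⟨hs, hsI, hus.trans hc.2.2⟩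
    rw [toFrac_eq hu, toFrac_eq hc, toFrac_eq hb, div_mul_div_cancel₀ (by simpa using hb0)]

end AdmPair

end ExtendedCentroid

open scoped Fin.NatCast Fin.CommRing

namespace DGraph.GPath

variable {G : DGraph}

theorem comp_src (p q : GPath G) (h : p.rng = q.src) : (p.comp q h).src = p.src := by
  rcases p with v | ⟨l, hl, -⟩
  · exact h.symm
  rcases q with w | ⟨m, hm, -⟩
  · rfl
  · exact congrArg G.s (List.head_append_of_ne_nil hl)

theorem comp_length (p q : GPath G) (h : p.rng = q.src) :
    (p.comp q h).length = p.length + q.length := by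
  rcases p with v | l
  · exact (zero_add _).symm
  rcases q with w | m
  · rfl
  · exact List.length_append

theorem comp_ofVertex_rng (p : GPath G) : p.comp (ofVertex p.rng) rfl = p := by
  rcases p with v | l <;> rfl

end DGraph.GPath

namespace cycleGraph

open GPath

variable {n : ℕ} [NeZero n]

instance : Fintype (cycleGraph n).V := inferInstanceAs (Fintype (Fin n))

theorem IsComposable.getElem_eq {l : List (Fin n)} (hl : (cycleGraph n).IsComposable l)
    (i : ℕ) (hi : i < l.length) : l[i] = l[0] + i := by
  induction i with
  | zero => simp
  | succ i ih =>
    have hstep : l[i] + 1 = l[i + 1] := List.isChain_iff_getElem.mp hl i hi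
    rw [← hstep, ih]
    push_cast
    ring

theorem IsComposable.getLast_add_one {l : List (Fin n)} (hc : (cycleGraph n).IsComposable l)
    (hl : l ≠ []) : l.getLast hl + 1 = l.head hl + l.length := by
  rw [List.getLast_eq_getElem, IsComposable.getElem_eq hc, List.head_eq_getElem,
    Nat.cast_pred (List.length_pos_iff.mpr hl)]
  ring

theorem IsComposable.ext {l m : List (Fin n)} (hlc : (cycleGraph n).IsComposable l)
    (hmc : (cycleGraph n).IsComposable m) (hl : l ≠ []) (hm : m ≠ [])
    (hhead : l.head hl = m.head hm) (hlen : l.length = m.length) : l = m := by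
  have h0 : l[0]'(List.length_pos_iff.mpr hl) = m[0]'(List.length_pos_iff.mpr hm) := by
    simpa only [List.head_eq_getElem] using hhead
  refine List.ext_getElem hlen fun i hi hi' => ?_
  rw [IsComposable.getElem_eq hlc, IsComposable.getElem_eq hmc, h0]

theorem rng_eq_add_length {p : GPath (cycleGraph n)} {v : Fin n} (hv : p.src = v) :
    p.rng = v + (p.length : Fin n) := by
  subst hv
  rcases p with v | ⟨l, hl, hc⟩
  · exact (add_zero (M := Fin n) v).symm
  · exact IsComposable.getLast_add_one hc hl

theorem ext_src_length {p q : GPath (cycleGraph n)} (hs : p.src = q.src)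
    (hl : p.length = q.length) : p = q := by
  rcases p with v | ⟨l, hl0, hlc⟩ <;> rcases q with w | ⟨m, hm0, hmc⟩
  · exact congrArg Sum.inl hs
  · exact absurd hl.symm (List.length_pos_iff.mpr hm0).ne'
  · exact absurd hl (List.length_pos_iff.mpr hl0).ne'
  · exact congrArg Sum.inr (Subtype.ext (IsComposable.ext hlc hmc hl0 hm0 hs hl))

theorem exists_src_length (v : Fin n) (m : ℕ) :
    ∃ p : GPath (cycleGraph n), p.src = v ∧ p.length = m := by
  induction m generalizing v with
  | zero => exact ⟨ofVertex v, rfl, rfl⟩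
  | succ m ih =>
    obtain ⟨p, hp, hpl⟩ := ih (v + 1)
    refine ⟨(ofEdge (G := cycleGraph n) v).comp p hp.symm, comp_src ..,
      (comp_length ..).trans ?_⟩
    show 1 + p.length = m + 1
    omega

noncomputable def pathEquiv : GPath (cycleGraph n) ≃ Fin n × ℕ :=
  Equiv.ofBijective (fun p => (p.src, p.length))
    ⟨fun _ _ h => ext_src_length (Prod.ext_iff.mp h).1 (Prod.ext_iff.mp h).2,
      fun ⟨v, m⟩ => (exists_src_length v m).imp fun _ h => Prod.ext h.1 h.2⟩

theorem src_pathEquiv_symm (x : Fin n × ℕ) : (pathEquiv.symm x).src = x.1 :=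
  congrArg Prod.fst (pathEquiv.apply_symm_apply x)

theorem length_pathEquiv_symm (x : Fin n × ℕ) : (pathEquiv.symm x).length = x.2 :=
  congrArg Prod.snd (pathEquiv.apply_symm_apply x)

end cycleGraph

open Polynomial

namespace PathAlgebraOn

open GPath cycleGraph

section NonUnital

variable {K : Type} [Field K] {G : DGraph} {A : Type} [NonUnitalRing A] [Module K A]
  (PA : PathAlgebraOn K G A)

theorem basis_ofVertex_mul [DecidableEq G.V] (v : G.V) (p : GPath G) :
    PA.basis (ofVertex v) * PA.basis p = if v = p.src then PA.basis p else 0 := by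
  split_ifs with h
  · exact PA.mul_comp (ofVertex v) p h
  · exact PA.mul_ncomp (ofVertex v) p h

theorem basis_mul_ofVertex [DecidableEq G.V] (p : GPath G) (v : G.V) :
    PA.basis p * PA.basis (ofVertex v) = if p.rng = v then PA.basis p else 0 := by
  split_ifs with h
  · subst h
    rw [PA.mul_comp _ _ rfl, comp_ofVertex_rng]
  · exact PA.mul_ncomp _ _ h

variable [Fintype G.V]

theorem sum_ofVertex_mul [SMulCommClass K A A] (a : A) :
    (∑ v, PA.basis (ofVertex v)) * a = a := by
  classical
  suffices LinearMap.mulLeft K (∑ v, PA.basis (ofVertex v)) = LinearMap.id from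
    LinearMap.congr_fun this a
  refine PA.basis.ext fun p => ?_
  simp [Finset.sum_mul, basis_ofVertex_mul]

theorem mul_sum_ofVertex [IsScalarTower K A A] (a : A) :
    a * ∑ v, PA.basis (ofVertex v) = a := by
  classical
  suffices LinearMap.mulRight K (∑ v, PA.basis (ofVertex v)) = LinearMap.id from
    LinearMap.congr_fun this a
  refine PA.basis.ext fun p => ?_
  simp [Finset.mul_sum, basis_mul_ofVertex]

/-- An `abbrev`, so that structures derived from this ring unify with the given ones at
instance transparency. -/
noncomputable abbrev toRing [SMulCommClass K A A] [IsScalarTower K A A] : Ring A :=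
  { ‹NonUnitalRing A› with
    one := ∑ v, PA.basis (ofVertex v)
    one_mul := PA.sum_ofVertex_mul
    mul_one := PA.mul_sum_ofVertex }

end NonUnital

section NonUnitalCycle

variable {K : Type} [Field K] {n : ℕ} [NeZero n] {A : Type} [NonUnitalRing A] [Module K A]
  (PA : PathAlgebraOn K (cycleGraph n) A)

/-- The path basis, indexed by (source, length). -/
noncomputable def cycleBasis : Module.Basis (Fin n × ℕ) K A :=
  PA.basis.reindex cycleGraph.pathEquiv

theorem cycleBasis_mul (v : Fin n) (m : ℕ) (w : Fin n) (k : ℕ) :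
    PA.cycleBasis (v, m) * PA.cycleBasis (w, k) =
      if w = v + m then PA.cycleBasis (v, m + k) else 0 := by
  have hrng : (pathEquiv.symm (v, m)).rng = v + (m : Fin n) := by
    rw [rng_eq_add_length (src_pathEquiv_symm _), length_pathEquiv_symm]
  simp only [cycleBasis, Module.Basis.reindex_apply]
  split_ifs with h
  · rw [PA.mul_comp _ _ (hrng.trans (h.symm.trans (src_pathEquiv_symm (w, k)).symm))]
    congr 1
    refine ext_src_length ?_ ?_
    · exact (comp_src ..).trans
        ((src_pathEquiv_symm _).trans (src_pathEquiv_symm (v, m + k)).symm)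
    · rw [comp_length, length_pathEquiv_symm, length_pathEquiv_symm, length_pathEquiv_symm]
  · exact PA.mul_ncomp _ _ (by rw [hrng, src_pathEquiv_symm]; exact Ne.symm h)

theorem cycleBasis_zero (v : Fin n) :
    PA.cycleBasis (v, 0) = PA.basis (ofVertex (G := cycleGraph n) v) := by
  rw [cycleBasis, Module.Basis.reindex_apply]
  exact congrArg PA.basis (ext_src_length (src_pathEquiv_symm _) (length_pathEquiv_symm _))

end NonUnitalCycle

section Cycle

open cycleGraph

variable {K : Type} [Field K] {n : ℕ} [NeZero n] {A : Type} [Ring A] [Algebra K A]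
  (PA : PathAlgebraOn K (cycleGraph n) A)

theorem one_eq_sum_cycleBasis : (1 : A) = ∑ v, PA.cycleBasis (v, 0) := by
  simp only [cycleBasis_zero]
  exact (PA.mul_sum_ofVertex 1).symm.trans (one_mul _)

theorem cycleBasis_vertex_mul (v w : Fin n) (m : ℕ) :
    PA.cycleBasis (v, 0) * PA.cycleBasis (w, m) = if w = v then PA.cycleBasis (v, m) else 0 := by
  simp [cycleBasis_mul]

theorem cycleBasis_mul_vertex (v w : Fin n) (m : ℕ) :
    PA.cycleBasis (v, m) * PA.cycleBasis (w, 0) =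
      if w = v + m then PA.cycleBasis (v, m) else 0 := by
  simp [cycleBasis_mul]

/-- The variable `z` of the polynomial subalgebra `K[z]`, which is the center. -/
noncomputable def cycleSum : A := ∑ v, PA.cycleBasis (v, n)

theorem cycleSum_mul (v : Fin n) (m : ℕ) :
    PA.cycleSum * PA.cycleBasis (v, m) = PA.cycleBasis (v, n + m) := by
  simp [cycleSum, Finset.sum_mul, cycleBasis_mul]

theorem mul_cycleSum (v : Fin n) (m : ℕ) :
    PA.cycleBasis (v, m) * PA.cycleSum = PA.cycleBasis (v, n + m) := by
  simp [cycleSum, Finset.mul_sum, cycleBasis_mul, add_comm]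

theorem cycleSum_mem_center : PA.cycleSum ∈ Subalgebra.center K A := by
  rw [Subalgebra.mem_center_iff]
  intro a
  suffices LinearMap.mulRight K PA.cycleSum = LinearMap.mulLeft K PA.cycleSum from
    LinearMap.congr_fun this a
  exact PA.cycleBasis.ext fun ⟨v, m⟩ => by simp [cycleSum_mul, mul_cycleSum]

theorem aeval_cycleSum_mem_center (g : K[X]) : aeval PA.cycleSum g ∈ Set.center A := by
  rw [← aeval_subalgebra_coe g (Subalgebra.center K A) ⟨_, PA.cycleSum_mem_center⟩]
  exact Semigroup.mem_center_iff.mpr (Subalgebra.mem_center_iff.mp (Subtype.prop _))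

theorem cycleSum_pow_mul (j : ℕ) (v : Fin n) (m : ℕ) :
    PA.cycleSum ^ j * PA.cycleBasis (v, m) = PA.cycleBasis (v, n * j + m) := by
  induction j with
  | zero => simp
  | succ j ih => rw [pow_succ', mul_assoc, ih, cycleSum_mul, mul_add_one, add_comm (n * j) n,
      add_assoc]

theorem cycleSum_pow (j : ℕ) : PA.cycleSum ^ j = ∑ v, PA.cycleBasis (v, n * j) := by
  conv_lhs => rw [← mul_one (PA.cycleSum ^ j), PA.one_eq_sum_cycleBasis]
  simp [Finset.mul_sum, cycleSum_pow_mul]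

theorem eq_zero_of_aeval_cycleSum_mul_cycleBasis_eq_zero {g : K[X]} {v : Fin n} {r : ℕ}
    (h : aeval PA.cycleSum g * PA.cycleBasis (v, r) = 0) : g = 0 := by
  have hli : LinearIndependent K fun j : ℕ => PA.cycleBasis (v, n * j + r) :=
    PA.cycleBasis.linearIndependent.comp _ fun i j hij => by
      simpa [NeZero.ne n] using congrArg Prod.snd hij
  rw [aeval_eq_sum_range, Finset.sum_mul] at h
  simp_rw [smul_mul_assoc, cycleSum_pow_mul] at h
  have hcoeff := linearIndependent_iff'.mp hli _ _ h g.natDegree (Finset.self_mem_range_succ _)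
  exact leadingCoeff_eq_zero.mp hcoeff

/-- `e_v A e_w = K[z] · (shortest path from v to w)`. -/
theorem exists_vertex_mul_mul_vertex_eq (x : A) (v w : Fin n) :
    ∃ g : K[X], PA.cycleBasis (v, 0) * x * PA.cycleBasis (w, 0) =
      aeval PA.cycleSum g * PA.cycleBasis (v, (w - v).val) := by
  let corner : A →ₗ[K] A :=
    LinearMap.mulRight K (PA.cycleBasis (w, 0)) ∘ₗ LinearMap.mulLeft K (PA.cycleBasis (v, 0))
  let multiple : K[X] →ₗ[K] A :=
    LinearMap.mulRight K (PA.cycleBasis (v, (w - v).val)) ∘ₗ (aeval PA.cycleSum).toLinearMap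
  suffices LinearMap.range corner ≤ LinearMap.range multiple from
    (this ⟨x, rfl⟩).imp fun _ h => h.symm
  rw [LinearMap.range_eq_map, ← PA.cycleBasis.span_eq, Submodule.map_span_le]
  rintro _ ⟨⟨u, m⟩, rfl⟩
  simp only [corner, LinearMap.comp_apply, LinearMap.mulLeft_apply, LinearMap.mulRight_apply,
    cycleBasis_vertex_mul]
  split_ifs with hu
  · rw [cycleBasis_mul_vertex]
    split_ifs with hw
    · refine ⟨X ^ (m / n), ?_⟩
      have hval : (w - v).val = m % n := by rw [hw, add_sub_cancel_left, Fin.val_natCast]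
      simp [multiple, cycleSum_pow_mul, hval, Nat.div_add_mod]
    · exact zero_mem _
  · rw [zero_mul]
    exact zero_mem _

theorem exists_vertex_mul_mul_vertex_ne_zero {x : A} (hx : x ≠ 0) :
    ∃ v w : Fin n, PA.cycleBasis (v, 0) * x * PA.cycleBasis (w, 0) ≠ 0 := by
  by_contra! h
  apply hx
  calc x = 1 * x * 1 := by rw [one_mul, mul_one]
    _ = 0 := by simp [PA.one_eq_sum_cycleBasis, Finset.sum_mul, Finset.mul_sum, h]

theorem exists_vertex_mul_mul_vertex_eq_of_ne_zero {x : A} (hx : x ≠ 0) :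
    ∃ (g : K[X]) (v w : Fin n), g ≠ 0 ∧
      PA.cycleBasis (v, 0) * x * PA.cycleBasis (w, 0) =
        aeval PA.cycleSum g * PA.cycleBasis (v, (w - v).val) := by
  obtain ⟨v, w, hvw⟩ := PA.exists_vertex_mul_mul_vertex_ne_zero hx
  obtain ⟨g, hg⟩ := PA.exists_vertex_mul_mul_vertex_eq x v w
  refine ⟨g, v, w, fun hg0 => hvw ?_, hg⟩
  rw [hg, hg0, map_zero, zero_mul]

theorem eq_zero_or_eq_zero_of_aeval_cycleSum_mul_eq_zero {g : K[X]} {a : A}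
    (h : aeval PA.cycleSum g * a = 0) : g = 0 ∨ a = 0 := by
  refine or_iff_not_imp_right.mpr fun ha => ?_
  obtain ⟨p, v, w, hp, hcorner⟩ := PA.exists_vertex_mul_mul_vertex_eq_of_ne_zero ha
  have hcomm := Semigroup.mem_center_iff.mp (PA.aeval_cycleSum_mem_center g)
  refine (mul_eq_zero.mp (PA.eq_zero_of_aeval_cycleSum_mul_cycleBasis_eq_zero
    (v := v) (r := (w - v).val) ?_)).resolve_right hp
  calc aeval PA.cycleSum (g * p) * PA.cycleBasis (v, (w - v).val)
      = aeval PA.cycleSum g * (PA.cycleBasis (v, 0) * a * PA.cycleBasis (w, 0)) := by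
        rw [map_mul, mul_assoc, hcorner]
    _ = PA.cycleBasis (v, 0) * (aeval PA.cycleSum g * a) * PA.cycleBasis (w, 0) := by
        rw [← mul_assoc, ← mul_assoc, ← hcomm, mul_assoc (PA.cycleBasis (v, 0))]
    _ = 0 := by rw [h, mul_zero, zero_mul]

theorem exists_center_mul_vertex_eq {c : A} (hc : c ∈ Set.center A) (v : Fin n) :
    ∃ g : K[X], c * PA.cycleBasis (v, 0) = aeval PA.cycleSum g * PA.cycleBasis (v, 0) := by
  obtain ⟨g, hg⟩ := PA.exists_vertex_mul_mul_vertex_eq c v v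
  rw [sub_self, Fin.val_zero] at hg
  refine ⟨g, ?_⟩
  rw [← hg, Semigroup.mem_center_iff.mp hc, mul_assoc, cycleBasis_vertex_mul, if_pos rfl]

/-- Compare `c` on the two sides of the edge `v → v + 1`. -/
theorem eq_of_center_mul_vertex_eq {c : A} (hc : c ∈ Set.center A) {g h : K[X]} {v : Fin n}
    (hg : c * PA.cycleBasis (v, 0) = aeval PA.cycleSum g * PA.cycleBasis (v, 0))
    (hh : c * PA.cycleBasis (v + 1, 0) = aeval PA.cycleSum h * PA.cycleBasis (v + 1, 0)) :
    h = g := by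
  have hcomm := Semigroup.mem_center_iff.mp hc
  have hleft : PA.cycleBasis (v, 0) * PA.cycleBasis (v, 1) = PA.cycleBasis (v, 1) := by
    simp [cycleBasis_vertex_mul]
  have hright : PA.cycleBasis (v, 1) * PA.cycleBasis (v + 1, 0) = PA.cycleBasis (v, 1) := by
    simp [cycleBasis_mul_vertex]
  have h1 : c * PA.cycleBasis (v, 1) = aeval PA.cycleSum g * PA.cycleBasis (v, 1) := by
    rw [← hleft, ← mul_assoc, hg, mul_assoc]
  have h2 : PA.cycleBasis (v, 1) * c = aeval PA.cycleSum h * PA.cycleBasis (v, 1) := by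
    rw [← hright, mul_assoc, hcomm, hh, ← mul_assoc,
      Semigroup.mem_center_iff.mp (PA.aeval_cycleSum_mem_center h), mul_assoc]
  refine sub_eq_zero.mp (PA.eq_zero_of_aeval_cycleSum_mul_cycleBasis_eq_zero (v := v) (r := 1) ?_)
  rw [map_sub, sub_mul, ← h1, ← h2, hcomm, sub_self]

theorem center_subset_range_aeval : Set.center A ⊆ Set.range (aeval (R := K) PA.cycleSum) := by
  intro c hc
  choose g hg using PA.exists_center_mul_vertex_eq hc
  have hnat (k : ℕ) : g k = g 0 := by
    induction k with
    | zero => rw [Nat.cast_zero]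
    | succ k ih => rw [Nat.cast_succ, PA.eq_of_center_mul_vertex_eq hc (hg _) (hg _), ih]
  have hconst (v : Fin n) : g v = g 0 := by simpa using hnat v.val
  refine ⟨g 0, ?_⟩
  calc aeval PA.cycleSum (g 0) = ∑ v, aeval PA.cycleSum (g v) * PA.cycleBasis (v, 0) := by
        simp [hconst, ← Finset.mul_sum, ← PA.one_eq_sum_cycleBasis]
    _ = c := by simp [← hg, ← Finset.mul_sum, ← PA.one_eq_sum_cycleBasis]

/-- A nonzero element of an ideal has a nonzero corner `g(z)·(v → w)` in it, and padding
the corner by paths on both sides to total length `2n` puts `g(z) z²` in the ideal. -/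
theorem exists_aeval_cycleSum_mem {I : TwoSidedIdeal A} (hI : I ≠ ⊥) :
    ∃ g : K[X], g ≠ 0 ∧ aeval PA.cycleSum g ∈ I := by
  obtain ⟨x, hxI, hx0⟩ : ∃ x ∈ I, x ≠ 0 := by
    by_contra! h
    exact hI (TwoSidedIdeal.ext fun x => ⟨fun hx => (TwoSidedIdeal.mem_bot _).mpr (h x hx),
      fun hx => (TwoSidedIdeal.mem_bot _).mp hx ▸ I.zero_mem⟩)
  obtain ⟨g, v, w, hg, hcorner⟩ := PA.exists_vertex_mul_mul_vertex_eq_of_ne_zero hx0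
  set r := (w - v).val
  have hmem : aeval PA.cycleSum g * PA.cycleBasis (v, r) ∈ I :=
    hcorner ▸ I.mul_mem_right _ _ (I.mul_mem_left _ _ hxI)
  have hpad (u : Fin n) : PA.cycleBasis (u, (v - u).val) * PA.cycleBasis (v, r) *
      PA.cycleBasis (v + r, 2 * n - ((v - u).val + r)) = PA.cycleBasis (u, n * 2) := by
    have hu := (v - u).isLt
    have hr := (w - v).isLt
    rw [cycleBasis_mul, if_pos (by simp), cycleBasis_mul, if_pos (by push_cast; ring)]
    congr 2
    omega
  refine ⟨g * X ^ 2, mul_ne_zero hg (pow_ne_zero _ X_ne_zero), ?_⟩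
  rw [map_mul, map_pow, aeval_X, cycleSum_pow, Finset.mul_sum]
  refine I.finsetSum_mem _ _ fun u _ => ?_
  rw [← hpad u, ← mul_assoc, ← mul_assoc,
    ← Semigroup.mem_center_iff.mp (PA.aeval_cycleSum_mem_center g), mul_assoc (PA.cycleBasis _)]
  exact I.mul_mem_right _ _ (I.mul_mem_left _ _ hmem)

end Cycle

end PathAlgebraOn

/-- the extended centroid of `KCₙ` is isomorphic to `K(x)`:
there is a map from admissible pairs onto `K(x)` which identifies exactly the
equivalent pairs, sends the identity to `1`, and is additive and multiplicative on
representatives of sums and products of classes. -/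
theorem stmt7 (K : Type) [Field K] (n : ℕ) [NeZero n]
    (A : Type) [NonUnitalRing A] [Module K A] [SMulCommClass K A A] [IsScalarTower K A A]
    (PA : PathAlgebraOn K (cycleGraph n) A) :
    ∃ Ω : AdmPair K A → RatFunc K,
      Function.Surjective Ω ∧
      (∀ p q : AdmPair K A, Ω p = Ω q ↔ p.Equiv q) ∧
      (∀ p : AdmPair K A, (∀ x ∈ p.I, p.f x = x) → Ω p = 1) ∧
      (∀ p q r : AdmPair K A, r.I ≤ p.I → r.I ≤ q.I →
        (∀ x ∈ r.I, r.f x = p.f x + q.f x) → Ω r = Ω p + Ω q) ∧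
      (∀ p q r : AdmPair K A, r.I ≤ q.I →
        (∀ x ∈ r.I, q.f x ∈ p.I ∧ r.f x = p.f (q.f x)) → Ω r = Ω p * Ω q) := by
  let _ : Ring A := PA.toRing
  let _ : Algebra K A := Algebra.ofModule smul_mul_assoc mul_smul_comm
  let _ : Algebra K[X] A := (aeval PA.cycleSum).toRingHom.toAlgebra' fun g a =>
    (Semigroup.mem_center_iff.mp (PA.aeval_cycleSum_mem_center g) a).symm
  have : Module.IsTorsionFree K[X] A :=
    .of_smul_eq_zero fun _ _ => PA.eq_zero_or_eq_zero_of_aeval_cycleSum_mul_eq_zero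
  have : Nontrivial A := nontrivial_of_ne _ _ (PA.cycleBasis.ne_zero (0, 0))
  have hcenter : Set.center A ⊆ Set.range (algebraMap K[X] A) := PA.center_subset_range_aeval
  have hideal (I : TwoSidedIdeal A) (hI : I ≠ ⊥) :
      ∃ s : K[X], s ≠ 0 ∧ algebraMap K[X] A s ∈ I :=
    PA.exists_aeval_cycleSum_mem hI
  exact ⟨AdmPair.toFrac K[X] (RatFunc K), AdmPair.toFrac_surjective,
    fun _ _ => AdmPair.toFrac_eq_toFrac_iff hcenter hideal,
    fun _ => AdmPair.toFrac_eq_one hideal,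
    fun _ _ _ => AdmPair.toFrac_add hcenter hideal,
    fun _ _ _ => AdmPair.toFrac_comp hcenter hideal⟩
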